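/- Fix an integer k ≥ 1 and write ĥ(n, x) = Wr[H_k, H_{n−k+1}](x) for the 1-step exceptional Hermite polynomial of degree n (so ĥ(n,·) = 0 when n − k + 1 < 0 or n = 2k − 1). Then for every integer n with n ≥ k − 1 and n ≠ 2k − 1, and every x ∈ ℝ: H_{k+1}(x) · ĥ(n, x) = (n − 2k + 1) Σ_{j=0}^{k+1} 2^j · C(k+1, j) · (n + 3 − k − j)_{j−1} · ĥ(n + k + 1 − 2j, x), where C(k+1, j) is the binomial coefficient and (X)_m = X(X+1)⋯(X+m−1) is the Pochhammer symbol with the convention (X)_{−1} = 1/(X−1) (note n + 2 − k ≥ 1 for the j = 0 term). -/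

import Mathlib

noncomputable section

/-- Physicists' Hermite polynomials indexed by naturals. -/
def hermN : ℕ → Polynomial ℝ
  | 0 => 1
  | 1 => Polynomial.C 2 * Polynomial.X
  | (n + 2) => Polynomial.C 2 * Polynomial.X * hermN (n + 1)
      - Polynomial.C (2 * ((n : ℝ) + 1)) * hermN n

/-- Physicists' Hermite polynomials indexed by integers, `0` for negative index. -/
def Herm (n : ℤ) : Polynomial ℝ := if 0 ≤ n then hermN n.toNat else 0

/-- Hermite polynomial as a real function. -/
def H (n : ℤ) : ℝ → ℝ := fun x => (Herm n).eval x

/-- The Wronskian determinant of a finite family of functions. -/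
def Wr {m : ℕ} (f : Fin m → ℝ → ℝ) (x : ℝ) : ℝ :=
  Matrix.det (Matrix.of fun i j : Fin m => iteratedDeriv (j : ℕ) (f i) x)

/-- The Pochhammer symbol `(X)_m = X(X+1)⋯(X+m-1)`, with the convention
`(X)_(-1) = 1/(X-1)`. -/
def pochI (X : ℝ) (m : ℤ) : ℝ :=
  if m = -1 then 1 / (X - 1) else ∏ i ∈ Finset.range m.toNat, (X + i)

/-- The 1-step exceptional Hermite polynomial `ĥ(n,x) = Wr[H_k, H_(n-k+1)](x)`. -/
def hh1 (k : ℕ) (n : ℤ) : ℝ → ℝ := fun x => Wr ![H (k : ℤ), H (n - k + 1)] x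

/-!
Write `W(f, g) = f g' - f' g`. By the product rule and `H'_(n+1) = 2(n+1) H_n`,
`W(H_k, H_(k+1) H_m) = H_(k+1) W(H_k, H_m) + 2(k+1) H_k² H_m` and `W(H_k, H_k H_(m+1)) = 2(m+1) H_k² H_m`,
so `(m+1) H_(k+1) W(H_k, H_m) = (m+1) W(H_k, H_(k+1) H_m) - (k+1) W(H_k, H_k H_(m+1))`.
Expanding both products with the linearization formula
`H_a H_b = ∑ⱼ 2^j j! C(a,j) C(b,j) H_(a+b-2j)` and simplifying the coefficients gives the recurrence
with `m = n - k + 1`.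
-/

open Polynomial Finset

lemma hermN_add_two (n : ℕ) :
    hermN (n + 2) = C 2 * X * hermN (n + 1) - C (2 * ((n : ℝ) + 1)) * hermN n := rfl

lemma Herm_natCast (n : ℕ) : Herm n = hermN n := by simp [Herm]

lemma C_two_mul_X_mul_Herm {s : ℤ} (hs : 0 ≤ s) :
    C 2 * X * Herm s = Herm (s + 1) + C (2 * (s : ℝ)) * Herm (s - 1) := by
  lift s to ℕ using hs
  cases s with
  | zero => simp [Herm, hermN]
  | succ n =>
    rw [show ((n + 1 : ℕ) : ℤ) + 1 = ((n + 2 : ℕ) : ℤ) by push_cast; ring,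
      show ((n + 1 : ℕ) : ℤ) - 1 = n by push_cast; ring, Herm_natCast, Herm_natCast, Herm_natCast,
      hermN_add_two]
    push_cast
    ring

lemma derivative_hermN_succ (n : ℕ) :
    derivative (hermN (n + 1)) = C (2 * ((n : ℝ) + 1)) * hermN n := by
  induction n using Nat.twoStepInduction with
  | zero => simp [hermN]
  | one =>
    simp only [hermN, derivative_sub, derivative_mul, derivative_C, derivative_X, derivative_one]
    simp only [map_ofNat, map_mul, map_add, map_one, Nat.cast_one, Nat.cast_zero, zero_add]
    ring
  | more n ih₀ ih₁ =>
    have h := hermN_add_two n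
    simp only [map_add, map_mul, map_natCast, map_one, map_ofNat] at h
    rw [hermN_add_two (n + 1)]
    simp only [derivative_sub, derivative_mul, derivative_C, derivative_X, ih₁, ih₀]
    push_cast
    simp only [map_add, map_mul, map_natCast, map_one, map_ofNat]
    linear_combination (-2 * (n : ℝ[X]) - 4) * h

-- `b.descFactorial j = j! * b.choose j`; this is the coefficient of `H_(a+b-2j)` in `H_a * H_b`.
def linCoeff (a b j : ℕ) : ℝ := 2 ^ j * a.choose j * b.descFactorial j

@[simp] lemma linCoeff_zero_right (a b : ℕ) : linCoeff a b 0 = 1 := by simp [linCoeff]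

lemma linCoeff_of_lt_left {a j : ℕ} (b : ℕ) (h : a < j) : linCoeff a b j = 0 := by
  simp [linCoeff, Nat.choose_eq_zero_of_lt h]

lemma linCoeff_of_lt_right {b j : ℕ} (a : ℕ) (h : b < j) : linCoeff a b j = 0 := by
  simp [linCoeff, Nat.descFactorial_eq_zero_iff_lt.mpr h]

lemma cast_choose_mul_succ (n k : ℕ) :
    (n.choose k : ℝ) * (n + 1) = (n + 1).choose k * ((n : ℝ) + 1 - k) := by
  rcases le_or_gt k (n + 1) with h | h
  · have h' := congrArg (Nat.cast (R := ℝ)) (Nat.choose_mul_succ_eq n k)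
    push_cast [Nat.cast_sub h] at h'
    exact h'
  · simp [Nat.choose_eq_zero_of_lt h, Nat.choose_eq_zero_of_lt (Nat.lt_of_succ_lt h)]

lemma cast_descFactorial_succ (n k : ℕ) :
    (n.descFactorial (k + 1) : ℝ) = ((n : ℝ) - k) * n.descFactorial k := by
  rw [← descPochhammer_eval_eq_descFactorial ℝ, ← descPochhammer_eval_eq_descFactorial ℝ,
    descPochhammer_succ_eval, mul_comm]

lemma linCoeff_add_two_succ (a b j : ℕ) :
    linCoeff (a + 2) b (j + 1) = linCoeff (a + 1) b (j + 1)
      + 2 * ((a : ℝ) + b + 1 - 2 * j) * linCoeff (a + 1) b j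
      - 2 * ((a : ℝ) + 1) * linCoeff a b j := by
  have hpascal : ((a + 2).choose (j + 1) : ℝ) = (a + 1).choose j + (a + 1).choose (j + 1) := by
    exact_mod_cast Nat.choose_succ_succ' (a + 1) j
  have hchoose := cast_choose_mul_succ a j
  simp only [linCoeff, cast_descFactorial_succ, hpascal]
  linear_combination (2 : ℝ) * 2 ^ j * b.descFactorial j * hchoose

lemma sum_range_linCoeff_mul_of_lt {a N : ℕ} (b : ℕ) (f : ℕ → ℝ[X]) (h : a < N) :
    ∑ j ∈ range N, C (linCoeff a b j) * f j = ∑ j ∈ range (a + 1), C (linCoeff a b j) * f j := by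
  refine (sum_subset (range_subset_range.mpr h) fun j _ hj => ?_).symm
  rw [linCoeff_of_lt_left b (by simpa using hj), map_zero, zero_mul]

lemma C_two_mul_X_mul_linCoeff_Herm (a b j : ℕ) :
    C 2 * X * (C (linCoeff (a + 1) b j) * Herm ((a : ℤ) + 1 + b - 2 * j)) =
      C (linCoeff (a + 1) b j) * Herm ((a : ℤ) + 2 + b - 2 * j)
        + C (2 * ((a : ℝ) + b + 1 - 2 * j) * linCoeff (a + 1) b j) * Herm ((a : ℤ) + b - 2 * j) := by
  -- the coefficient vanishes unless `j ≤ b` and `j ≤ a + 1`, which make the index `≥ 0`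
  rcases le_or_gt j b with hjb | hjb
  · rcases le_or_gt j (a + 1) with hja | hja
    · have h := C_two_mul_X_mul_Herm (s := (a : ℤ) + 1 + b - 2 * j) (by omega)
      rw [show (a : ℤ) + 1 + b - 2 * j + 1 = a + 2 + b - 2 * j by ring,
        show (a : ℤ) + 1 + b - 2 * j - 1 = a + b - 2 * j by ring] at h
      rw [mul_left_comm, h]
      push_cast
      simp only [map_mul, map_add, map_sub, map_natCast, map_ofNat, map_one]
      ring
    · simp [linCoeff_of_lt_left b hja]
  · simp [linCoeff_of_lt_right _ hjb]

theorem hermN_mul_hermN (a b : ℕ) :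
    hermN a * hermN b = ∑ j ∈ range (a + 1), C (linCoeff a b j) * Herm ((a : ℤ) + b - 2 * j) := by
  induction a using Nat.twoStepInduction with
  | zero => simp [hermN, Herm_natCast]
  | one =>
    have h := C_two_mul_X_mul_Herm (s := b) (by positivity)
    rw [Herm_natCast] at h
    rw [sum_range_succ, sum_range_one]
    simp only [hermN, h, linCoeff]
    push_cast
    simp only [Nat.descFactorial_one, Nat.descFactorial_zero, Nat.choose_zero_right,
      Nat.choose_one_right, pow_zero, pow_one, Nat.cast_one, mul_one, map_one, one_mul]
    ring_nf
  | more a ih₀ ih₁ =>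
    have ih₀' : hermN a * hermN b =
        ∑ j ∈ range (a + 2), C (linCoeff a b j) * Herm ((a : ℤ) + b - 2 * j) := by
      rw [ih₀, sum_range_linCoeff_mul_of_lt (N := a + 2) b _ (by omega)]
    have shift : ∑ j ∈ range (a + 2), C (linCoeff (a + 1) b j) * Herm ((a : ℤ) + 2 + b - 2 * j) =
        Herm ((a : ℤ) + 2 + b) +
          ∑ j ∈ range (a + 2), C (linCoeff (a + 1) b (j + 1)) * Herm ((a : ℤ) + b - 2 * j) := by
      rw [sum_range_succ' _ (a + 1), sum_range_succ _ (a + 1), linCoeff_of_lt_left b (lt_add_one _),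
        map_zero, zero_mul, add_zero, add_comm]
      push_cast
      simp only [linCoeff_zero_right, map_one, one_mul]
      ring_nf
    calc hermN (a + 2) * hermN b
        = C 2 * X * (hermN (a + 1) * hermN b) - C (2 * ((a : ℝ) + 1)) * (hermN a * hermN b) := by
          rw [hermN_add_two]; ring
      _ = Herm ((a : ℤ) + 2 + b) + ∑ j ∈ range (a + 2),
            C (linCoeff (a + 2) b (j + 1)) * Herm ((a : ℤ) + b - 2 * j) := by
          rw [ih₁, ih₀', mul_sum, mul_sum]
          push_cast
          simp only [C_two_mul_X_mul_linCoeff_Herm, sum_add_distrib, shift, linCoeff_add_two_succ]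
          simp only [map_sub, map_add, sub_mul, add_mul, sum_sub_distrib, sum_add_distrib, C_mul,
            mul_assoc]
          ring
      _ = _ := by
          rw [sum_range_succ' _ (a + 2)]
          push_cast
          simp only [linCoeff_zero_right, map_one, one_mul]
          ring_nf

section Wronskian

variable {R : Type*} [CommRing R]

lemma wronskian_sum_right {ι : Type*} (a : R[X]) (s : Finset ι) (f : ι → R[X]) :
    wronskian a (∑ i ∈ s, f i) = ∑ i ∈ s, wronskian a (f i) :=
  map_sum (wronskianBilin R a) f s

lemma wronskian_C_mul_right (a : R[X]) (c : R) (b : R[X]) :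
    wronskian a (C c * b) = C c * wronskian a b := by
  simp only [wronskian, derivative_C_mul]; ring

lemma wronskian_mul_right (a q p : R[X]) :
    wronskian a (q * p) = q * wronskian a p + a * derivative q * p := by
  simp only [wronskian, derivative_mul]; ring

end Wronskian

lemma pochI_neg_one (x : ℝ) : pochI x (-1) = 1 / (x - 1) := if_pos rfl

lemma pochI_natCast_add_one_sub (m i : ℕ) : pochI ((m : ℝ) + 1 - i) i = m.descFactorial i := by
  rw [pochI, if_neg (by omega), Int.toNat_natCast, ← descPochhammer_eval_eq_descFactorial ℝ,
    descPochhammer_eval_eq_prod_range, ← prod_range_reflect]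
  refine prod_congr rfl fun t ht => ?_
  have ht : t < i := mem_range.mp ht
  rw [Nat.cast_sub (by omega : t ≤ i - 1), Nat.cast_sub (by omega : 1 ≤ i)]
  push_cast
  ring

lemma linCoeff_sub_linCoeff (k m j : ℕ) :
    ((m : ℝ) + 1) * linCoeff (k + 1) m j - ((k : ℝ) + 1) * linCoeff k (m + 1) j =
      ((m : ℝ) + 1) * (((m : ℝ) - k) *
        (2 ^ j * ((k + 1).choose j : ℝ) * pochI ((m : ℝ) + 2 - j) ((j : ℤ) - 1))) := by
  cases j with
  | zero =>
    have hm : (m : ℝ) + 1 ≠ 0 := by positivity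
    simp only [linCoeff_zero_right, Nat.choose_zero_right, Nat.cast_zero, Nat.cast_one,
      zero_sub, pow_zero, sub_zero, pochI_neg_one, show (m : ℝ) + 2 - 1 = m + 1 by ring]
    field_simp
    ring
  | succ i =>
    have hpoch := pochI_natCast_add_one_sub m i
    rw [show (m : ℝ) + 1 - i = m + 2 - ((i + 1 : ℕ) : ℝ) by push_cast; ring,
      show (i : ℤ) = ((i + 1 : ℕ) : ℤ) - 1 by push_cast; ring] at hpoch
    have hchoose := cast_choose_mul_succ k (i + 1)
    simp only [linCoeff, hpoch, cast_descFactorial_succ, Nat.succ_descFactorial_succ]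
    push_cast at hchoose ⊢
    linear_combination (-(2 : ℝ) ^ (i + 1) * ((m : ℝ) + 1) * m.descFactorial i) * hchoose

theorem hermN_succ_mul_wronskian (k m : ℕ) :
    hermN (k + 1) * wronskian (hermN k) (hermN m) =
      C ((m : ℝ) - k) * ∑ j ∈ range (k + 2),
        C (2 ^ j * ((k + 1).choose j : ℝ) * pochI ((m : ℝ) + 2 - j) ((j : ℤ) - 1)) *
          wronskian (hermN k) (Herm ((m : ℤ) + k + 1 - 2 * j)) := by
  have hm : (C ((m : ℝ) + 1) : ℝ[X]) ≠ 0 := C_ne_zero.mpr (by positivity)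
  have hprod : C ((m : ℝ) + 1) * (hermN (k + 1) * wronskian (hermN k) (hermN m)) =
      C ((m : ℝ) + 1) * wronskian (hermN k) (hermN (k + 1) * hermN m)
        - C ((k : ℝ) + 1) * wronskian (hermN k) (hermN k * hermN (m + 1)) := by
    rw [mul_comm (hermN k), wronskian_mul_right, wronskian_mul_right, wronskian_self_eq_zero,
      derivative_hermN_succ, derivative_hermN_succ]
    simp only [map_add, map_mul, map_natCast, map_one, map_ofNat]
    ring
  refine mul_left_cancel₀ hm ?_
  rw [hprod, hermN_mul_hermN, hermN_mul_hermN,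
    ← sum_range_linCoeff_mul_of_lt (a := k) (N := k + 2) (m + 1) _ (by omega)]
  simp only [wronskian_sum_right, wronskian_C_mul_right, mul_sum, ← sum_sub_distrib]
  refine sum_congr rfl fun j _ => ?_
  have hidx₁ : ((k + 1 : ℕ) : ℤ) + m - 2 * j = m + k + 1 - 2 * j := by push_cast; ring
  have hidx₂ : ((k : ℕ) : ℤ) + ((m + 1 : ℕ) : ℤ) - 2 * j = m + k + 1 - 2 * j := by push_cast; ring
  have hcoeff := congrArg C (linCoeff_sub_linCoeff k m j)
  rw [hidx₁, hidx₂]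
  simp only [map_sub, map_mul] at hcoeff ⊢
  linear_combination wronskian (hermN k) (Herm ((m : ℤ) + k + 1 - 2 * j)) * hcoeff

lemma hh1_eq_eval_wronskian (k : ℕ) (n : ℤ) (x : ℝ) :
    hh1 k n x = (wronskian (hermN k) (Herm (n - k + 1))).eval x := by
  have hderiv (s : ℤ) : deriv (H s) x = (derivative (Herm s)).eval x := Polynomial.deriv (Herm s)
  simp [hh1, Wr, Matrix.det_fin_two, hderiv, wronskian, H, Herm_natCast]

theorem stmt_17_general (k : ℕ)
    (n : ℤ) (hn : (k : ℤ) - 1 ≤ n) (x : ℝ) :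
    H ((k : ℤ) + 1) x * hh1 k n x =
      ((n : ℝ) - 2 * k + 1) * ∑ j ∈ Finset.range (k + 2),
        2 ^ j * (Nat.choose (k + 1) j : ℝ) *
          pochI ((n : ℝ) + 3 - k - j) ((j : ℤ) - 1) *
          hh1 k (n + k + 1 - 2 * j) x := by
  obtain ⟨m, rfl⟩ : ∃ m : ℕ, n = m + k - 1 := ⟨(n - k + 1).toNat, by omega⟩
  have key := congrArg (eval x) (hermN_succ_mul_wronskian k m)
  simp only [eval_mul, eval_C, eval_finsetSum] at key
  rw [H, show (k : ℤ) + 1 = ((k + 1 : ℕ) : ℤ) by push_cast; ring, Herm_natCast,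
    hh1_eq_eval_wronskian, show (m : ℤ) + k - 1 - k + 1 = m by ring, Herm_natCast, key]
  push_cast
  congr 1
  · ring
  · refine sum_congr rfl fun j _ => ?_
    rw [hh1_eq_eval_wronskian]
    ring_nf

/-- One-step recurrence relation for the exceptional Hermite polynomials. -/
theorem stmt_17 (k : ℕ) (hk : 1 ≤ k)
    (n : ℤ) (hn : (k : ℤ) - 1 ≤ n) (hne : n ≠ 2 * k - 1) (x : ℝ) :
    H ((k : ℤ) + 1) x * hh1 k n x =
      ((n : ℝ) - 2 * k + 1) * ∑ j ∈ Finset.range (k + 2),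
        2 ^ j * (Nat.choose (k + 1) j : ℝ) *
          pochI ((n : ℝ) + 3 - k - j) ((j : ℤ) - 1) *
          hh1 k (n + k + 1 - 2 * j) x :=
  stmt_17_general k n hn x

end
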